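/- If an arrangement (ι,κ) is globally adequate and some hospital has interview capacity greater than one, then every hospital has interview capacity at least two and every doctor has interview capacity at least two. -/
import Mathlib


/- Formal model of the two-step interview-then-match process of
Echenique-et-al-style markets: Step 1 computes the interview matching by
hospital-proposing deferred acceptance (with responsive, capacity-constrained
choice functions); Step 2 computes the final one-to-one matching by
doctor-proposing deferred acceptance on preferences restricted to interview
partners. -/

open Finset

section Model

variable {D H : Type*} [Fintype D] [Fintype H] [DecidableEq D] [DecidableEq H]

/-- The (at most) `n` best elements of `s` according to `rank` (lower rank = better). -/
def topN {α : Type*} [DecidableEq α] (rank : α → ℕ) (n : ℕ) (s : Finset α) : Finset α :=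
  s.filter fun x => (s.filter fun y => rank y < rank x).card < n

/-- A market: strict preferences represented by rank functions
(lower rank = more preferred) together with acceptability predicates. -/
structure Market (D H : Type*) where
  rankDH : D → H → ℕ
  accD : D → H → Bool
  rankHD : H → D → ℕ
  accH : H → D → Bool

/-- Strict preferences: rank functions are injective. -/
def Market.Strict (M : Market D H) : Prop :=
  (∀ d, Function.Injective (M.rankDH d)) ∧ (∀ h, Function.Injective (M.rankHD h))

/-- Hospital `h` proposes to its `ι h` best acceptable doctors that have not rejected it. -/
def hProps (M : Market D H) (ι : H → ℕ) (R : Finset (H × D)) (h : H) : Finset D :=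
  topN (M.rankHD h) (ι h) (univ.filter fun d => M.accH h d ∧ (h, d) ∉ R)

/-- Doctor `d` keeps her `κ d` best acceptable proposals. -/
def dKeeps (M : Market D H) (ι : H → ℕ) (κ : D → ℕ) (R : Finset (H × D)) (d : D) :
    Finset H :=
  topN (fun h => M.rankDH d h) (κ d) (univ.filter fun h => M.accD d h ∧ d ∈ hProps M ι R h)

/-- One round of hospital-proposing deferred acceptance: the (cumulative) rejection set
grows by the proposals not kept. -/
def iStep (M : Market D H) (ι : H → ℕ) (κ : D → ℕ) (R : Finset (H × D)) :
    Finset (H × D) :=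
  R ∪ univ.filter fun p : H × D => p.2 ∈ hProps M ι R p.1 ∧ p.1 ∉ dKeeps M ι κ R p.2

/-- Rejection set at the end of hospital-proposing DA (interview step). -/
def iRej (M : Market D H) (ι : H → ℕ) (κ : D → ℕ) : Finset (H × D) :=
  (iStep M ι κ)^[Fintype.card D * Fintype.card H] ∅

/-- The interview matching (the hospital-optimal stable many-to-many matching) computed
by hospital-proposing deferred acceptance: pairs `(h, d)` such that `h` interviews `d`. -/
def interviews (M : Market D H) (ι : H → ℕ) (κ : D → ℕ) : Finset (H × D) :=
  univ.filter fun p : H × D =>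
    p.2 ∈ hProps M ι (iRej M ι κ) p.1 ∧ p.1 ∈ dKeeps M ι κ (iRej M ι κ) p.2

/-- Doctor `d` proposes to her best interview partner that has not rejected her. -/
def dProps (M : Market D H) (V : Finset (H × D)) (S : Finset (D × H)) (d : D) :
    Finset H :=
  topN (M.rankDH d) 1 (univ.filter fun h => (h, d) ∈ V ∧ (d, h) ∉ S)

/-- Hospital `h` keeps its best proposal. -/
def hKeeps (M : Market D H) (V : Finset (H × D)) (S : Finset (D × H)) (h : H) :
    Finset D :=
  topN (M.rankHD h) 1 (univ.filter fun d => h ∈ dProps M V S d)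

/-- One round of doctor-proposing DA on preferences restricted to the interview matching `V`. -/
def mStep (M : Market D H) (V : Finset (H × D)) (S : Finset (D × H)) : Finset (D × H) :=
  S ∪ univ.filter fun p : D × H => p.2 ∈ dProps M V S p.1 ∧ p.1 ∉ hKeeps M V S p.2

/-- Rejection set at the end of the doctor-proposing DA of the matching step. -/
def mRej (M : Market D H) (V : Finset (H × D)) : Finset (D × H) :=
  (mStep M V)^[Fintype.card D * Fintype.card H] ∅

/-- The final matching: doctor-proposing DA on preferences restricted to interviews `V`. -/
def finalMatch (M : Market D H) (V : Finset (H × D)) : Finset (D × H) :=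
  univ.filter fun p : D × H =>
    p.2 ∈ dProps M V (mRej M V) p.1 ∧ p.1 ∈ hKeeps M V (mRej M V) p.2

/-- The `(ι,κ)`-matching: the culmination of the two-step process. -/
def ikMatching (M : Market D H) (ι : H → ℕ) (κ : D → ℕ) : Finset (D × H) :=
  finalMatch M (interviews M ι κ)

/-- `(d, h)` is a blocking pair of `μ` (w.r.t. the true, unrestricted preferences). -/
def Blocks (M : Market D H) (μ : Finset (D × H)) (d : D) (h : H) : Prop :=
  M.accD d h ∧ M.accH h d ∧ (d, h) ∉ μ ∧
    (∀ h', (d, h') ∈ μ → M.rankDH d h < M.rankDH d h') ∧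
    (∀ d', (d', h) ∈ μ → M.rankHD h d < M.rankHD h d')

instance (M : Market D H) (μ : Finset (D × H)) (d : D) (h : H) :
    Decidable (Blocks M μ d h) := by
  unfold Blocks; infer_instance

/-- A matching is stable if it admits no blocking pair. -/
def Stable (M : Market D H) (μ : Finset (D × H)) : Prop := ∀ d h, ¬ Blocks M μ d h

/-- `(ι,κ)` is adequate at `M` if the `(ι,κ)`-matching is stable. -/
def Adequate (M : Market D H) (ι : H → ℕ) (κ : D → ℕ) : Prop :=
  Stable M (ikMatching M ι κ)

/-- One-to-one matching (as a set of pairs). -/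
def IsMatching (μ : Finset (D × H)) : Prop :=
  (∀ d h h', (d, h) ∈ μ → (d, h') ∈ μ → h = h') ∧
    (∀ d d' h, (d, h) ∈ μ → (d', h) ∈ μ → d = d')

/-- Common preferences: all doctors rank the hospitals identically, all hospitals rank
the doctors identically, everyone is mutually acceptable (and preferences are strict). -/
def CommonPrefs (M : Market D H) : Prop :=
  M.Strict ∧ (∀ d d', M.rankDH d = M.rankDH d') ∧ (∀ h h', M.rankHD h = M.rankHD h') ∧
    ∀ d h, M.accD d h ∧ M.accH h d

/-- Number of hospitals matched under `μ`. -/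
def matchedHospitals (μ : Finset (D × H)) : ℕ :=
  (univ.filter fun h : H => ∃ d, (d, h) ∈ μ).card

/-- Number of blocking pairs of `μ`. -/
def blockingCount (M : Market D H) (μ : Finset (D × H)) : ℕ :=
  (univ.filter fun p : D × H => Blocks M μ p.1 p.2).card

end Model

/-- `(ι,κ)` is globally adequate: adequate at every (strict) preference profile. -/
def GloballyAdequate (D H : Type*) [Fintype D] [Fintype H] [DecidableEq D] [DecidableEq H]
    (ι : H → ℕ) (κ : D → ℕ) : Prop :=
  ∀ M : Market D H, M.Strict → Adequate M ι κ

variable {D H : Type*} [Fintype D] [Fintype H] [DecidableEq D] [DecidableEq H]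


set_option linter.unusedSectionVars false

section Helpers
variable {α : Type*} [DecidableEq α]

lemma mem_topN {r : α → ℕ} {n : ℕ} {s : Finset α} {x : α} :
    x ∈ topN r n s ↔ x ∈ s ∧ (s.filter fun y => r y < r x).card < n := by
  simp [topN]

lemma topN_empty (r : α → ℕ) (n : ℕ) : topN r n (∅ : Finset α) = ∅ := by
  simp [topN]

lemma topN_singleton (r : α → ℕ) {n : ℕ} (hn : 0 < n) (a : α) :
    topN r n {a} = {a} := by
  ext x
  rw [mem_topN]
  simp only [mem_singleton]
  constructor
  · rintro ⟨h, _⟩; exact h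
  · intro hx
    refine ⟨hx, ?_⟩
    subst hx
    have : ({x} : Finset α).filter (fun y => r y < r x) = ∅ := by
      rw [filter_singleton, if_neg (lt_irrefl _)]
    rw [this]; simpa using hn

lemma topN_pair_full (r : α → ℕ) {n : ℕ} (hn : 2 ≤ n) {a b : α} (hab : a ≠ b) :
    topN r n ({a, b} : Finset α) = {a, b} := by
  ext x
  rw [mem_topN]
  constructor
  · rintro ⟨h, _⟩; exact h
  · intro hx
    refine ⟨hx, ?_⟩
    have hsub : ({a, b} : Finset α).filter (fun y => r y < r x) ⊆ ({a,b} : Finset α).erase x := by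
      intro y hy
      rw [mem_filter] at hy
      rw [mem_erase]
      exact ⟨fun e => by subst e; exact lt_irrefl _ hy.2, hy.1⟩
    have h1 : (({a,b} : Finset α).erase x).card ≤ 1 := by
      have := card_erase_of_mem hx
      rw [this, card_pair hab]
    calc (({a, b} : Finset α).filter (fun y => r y < r x)).card
        ≤ (({a,b} : Finset α).erase x).card := card_le_card hsub
      _ ≤ 1 := h1
      _ < n := by omega

lemma topN_pair_one (r : α → ℕ) {a b : α} (hr : r a < r b) :
    topN r 1 ({a, b} : Finset α) = {a} := by
  have hab : a ≠ b := fun e => by subst e; exact lt_irrefl _ hr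
  ext x
  rw [mem_topN]
  simp only [mem_insert, mem_singleton]
  constructor
  · rintro ⟨hx | hx, hc⟩
    · exact hx
    · exfalso
      have ha : a ∈ ({a, b} : Finset α).filter (fun y => r y < r x) := by
        rw [hx]; simp [hr]
      have := card_pos.2 ⟨a, ha⟩
      omega
  · intro hx
    refine ⟨Or.inl hx, ?_⟩
    have : ({a, b} : Finset α).filter (fun y => r y < r x) = ∅ := by
      rw [eq_empty_iff_forall_notMem]
      intro y hy
      rw [mem_filter, mem_insert, mem_singleton] at hy
      rcases hy.1 with h1 | h1
      · exact absurd hy.2 (by rw [h1, hx]; exact lt_irrefl _)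
      · exact absurd hy.2 (by rw [h1, hx]; exact not_lt.2 hr.le)
    rw [this]; simp

end Helpers

section Rk
variable {α : Type*} [Fintype α] [DecidableEq α]

noncomputable def rkFun (a b : α) : α → ℕ := fun x =>
  if x = a then 0 else if x = b then 1 else (Fintype.equivFin α x : ℕ) + 2

lemma rkFun_a {a b : α} (hab : a ≠ b) : rkFun a b a = 0 := by simp [rkFun]

lemma rkFun_b {a b : α} (hab : a ≠ b) : rkFun a b b = 1 := by
  simp [rkFun, hab.symm]

lemma rkFun_inj {a b : α} (hab : a ≠ b) : Function.Injective (rkFun a b) := by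
  intro x y h
  by_cases hxa : x = a <;> by_cases hya : y = a
  · rw [hxa, hya]
  · exfalso; by_cases hyb : y = b <;>
      simp [rkFun, hxa, hya, hyb, hab, Ne.symm hab] at h
  · exfalso; by_cases hxb : x = b <;>
      simp [rkFun, hxa, hya, hxb, hab, Ne.symm hab] at h
  · by_cases hxb : x = b <;> by_cases hyb : y = b
    · rw [hxb, hyb]
    · exfalso; simp [rkFun, hxa, hya, hxb, hyb, hab, Ne.symm hab] at h
    · exfalso; simp [rkFun, hxa, hya, hxb, hyb, hab, Ne.symm hab] at h
    · simp only [rkFun, if_neg hxa, if_neg hya, if_neg hxb, if_neg hyb,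
        Nat.add_right_cancel_iff] at h
      have : (Fintype.equivFin α x) = (Fintype.equivFin α y) := Fin.val_injective h
      exact (Fintype.equivFin α).injective this


section Aux
variable {D H : Type*} [Fintype D] [Fintype H] [DecidableEq D] [DecidableEq H]

lemma final_elim {M : Market D H} {V : Finset (H × D)} {d : D} {h : H}
    (hm : (d, h) ∈ finalMatch M V) : (h, d) ∈ V := by
  rw [finalMatch, mem_filter] at hm
  have h1 := hm.2.1
  rw [dProps, mem_topN] at h1
  have := h1.1
  rw [mem_filter] at this
  exact this.2.1

lemma interviews_elim {M : Market D H} {ι : H → ℕ} {κ : D → ℕ} {h : H} {d : D}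
    (hm : (h, d) ∈ interviews M ι κ) :
    M.accH h d ∧ M.accD d h ∧ 0 < ι h ∧ 0 < κ d := by
  rw [interviews, mem_filter] at hm
  obtain ⟨-, h1, h2⟩ := hm
  rw [hProps, mem_topN] at h1
  rw [dKeeps, mem_topN] at h2
  obtain ⟨h1a, h1b⟩ := h1
  obtain ⟨h2a, h2b⟩ := h2
  rw [mem_filter] at h1a h2a
  exact ⟨h1a.2.1, h2a.2.1, lt_of_le_of_lt (Nat.zero_le _) h1b,
    lt_of_le_of_lt (Nat.zero_le _) h2b⟩

lemma ik_elim {M : Market D H} {ι : H → ℕ} {κ : D → ℕ} {d : D} {h : H}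
    (hm : (d, h) ∈ ikMatching M ι κ) :
    M.accH h d ∧ M.accD d h ∧ 0 < ι h ∧ 0 < κ d :=
  interviews_elim (final_elim hm)

/-- Market for cases A and B: a single mutually acceptable pair. -/
noncomputable def MAB (d₁ : D) (h₁ : H) : Market D H where
  rankDH := fun _ h => (Fintype.equivFin H h : ℕ)
  accD := fun d h => decide (d = d₁ ∧ h = h₁)
  rankHD := fun _ d => (Fintype.equivFin D d : ℕ)
  accH := fun h d => decide (d = d₁ ∧ h = h₁)

lemma MAB_strict (d₁ : D) (h₁ : H) : (MAB d₁ h₁ : Market D H).Strict := by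
  constructor
  · intro d x y hxy
    exact (Fintype.equivFin H).injective (Fin.val_injective hxy)
  · intro h x y hxy
    exact (Fintype.equivFin D).injective (Fin.val_injective hxy)

lemma caseAB (d₁ : D) (h₁ : H) (ι : H → ℕ) (κ : D → ℕ)
    (hcap : ι h₁ = 0 ∨ κ d₁ = 0) : ¬ Adequate (MAB d₁ h₁) ι κ := by
  intro had
  have hμ : ikMatching (MAB d₁ h₁) ι κ = ∅ := by
    rw [eq_empty_iff_forall_notMem]
    rintro ⟨d, h⟩ hm
    have h2 := ik_elim hm
    have hacc : d = d₁ ∧ h = h₁ := by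
      have := h2.1
      simpa [MAB] using this
    obtain ⟨rfl, rfl⟩ := hacc
    rcases hcap with h0 | h0
    · have := h2.2.2.1; omega
    · have := h2.2.2.2; omega
  refine had d₁ h₁ ?_
  rw [hμ]
  refine ⟨by simp [MAB], by simp [MAB], notMem_empty _, ?_, ?_⟩
  · intro h' hm'; exact absurd hm' (notMem_empty _)
  · intro d' hm'; exact absurd hm' (notMem_empty _)

/-- Market for case D (some doctor has κ = 1). -/
noncomputable def MD (d₁ d₂ : D) (h₀ h₁ : H) : Market D H where
  rankDH := fun _ => rkFun h₀ h₁
  accD := fun d h => decide ((d = d₁ ∧ (h = h₀ ∨ h = h₁)) ∨ (d = d₂ ∧ h = h₀))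
  rankHD := fun _ => rkFun d₂ d₁
  accH := fun h d => decide ((d = d₁ ∧ (h = h₀ ∨ h = h₁)) ∨ (d = d₂ ∧ h = h₀))

lemma MD_strict {d₁ d₂ : D} {h₀ h₁ : H} (hd : d₁ ≠ d₂) (hh : h₀ ≠ h₁) :
    (MD d₁ d₂ h₀ h₁ : Market D H).Strict :=
  ⟨fun _ => rkFun_inj hh, fun _ => rkFun_inj hd.symm⟩

lemma caseD (d₁ d₂ : D) (h₀ h₁ : H) (hd : d₁ ≠ d₂) (hh : h₀ ≠ h₁)
    (ι : H → ℕ) (κ : D → ℕ) (hι0 : 2 ≤ ι h₀) (hι1 : 1 ≤ ι h₁)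
    (hκ1 : κ d₁ = 1) (hκ2 : 1 ≤ κ d₂) :
    ¬ Adequate (MD d₁ d₂ h₀ h₁) ι κ := by
  intro had
  set M := MD d₁ d₂ h₀ h₁ with hM
  -- Step 1 of interview DA
  have hP0 : ∀ h : H, hProps M ι (∅ : Finset (H × D)) h =
      if h = h₀ then {d₁, d₂} else if h = h₁ then {d₁} else ∅ := by
    intro h
    rw [hProps]
    by_cases e0 : h = h₀
    · rw [e0, if_pos rfl]
      have hfil : (univ.filter fun d => M.accH h₀ d ∧ (h₀, d) ∉ (∅ : Finset (H × D)))
          = {d₁, d₂} := by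
        ext d
        simp [hM, MD, hd, Ne.symm hd, hh, Ne.symm hh]
      rw [hfil]
      exact topN_pair_full _ hι0 hd
    · by_cases e1 : h = h₁
      · rw [e1, if_neg (Ne.symm hh), if_pos rfl]
        have hfil : (univ.filter fun d => M.accH h₁ d ∧ (h₁, d) ∉ (∅ : Finset (H × D)))
            = {d₁} := by
          ext d
          simp [hM, MD, e0, hd, Ne.symm hd, hh, Ne.symm hh]
        rw [hfil]
        exact topN_singleton _ (by omega) d₁
      · rw [if_neg e0, if_neg e1]
        have hfil : (univ.filter fun d => M.accH h d ∧ (h, d) ∉ (∅ : Finset (H × D)))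
            = ∅ := by
          ext d
          simp [hM, MD, e0, e1, hd, Ne.symm hd, hh, Ne.symm hh]
        rw [hfil]
        exact topN_empty _ _
  have hK0 : ∀ d : D, dKeeps M ι κ (∅ : Finset (H × D)) d =
      if d = d₁ then {h₀} else if d = d₂ then {h₀} else ∅ := by
    intro d
    rw [dKeeps]
    by_cases e0 : d = d₁
    · rw [e0, if_pos rfl]
      have hfil : (univ.filter fun h => M.accD d₁ h ∧ d₁ ∈ hProps M ι ∅ h)
          = {h₀, h₁} := by
        ext h
        simp only [mem_filter, mem_univ, true_and, hP0]
        by_cases f0 : h = h₀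
        · simp [f0, hM, MD, hd, Ne.symm hd, hh, Ne.symm hh]
        · by_cases f1 : h = h₁ <;> simp [f0, f1, hM, MD, hd, Ne.symm hd, hh, Ne.symm hh]
      rw [hfil, hκ1]
      exact topN_pair_one _ (by
        show (M.rankDH d₁) h₀ < (M.rankDH d₁) h₁
        have : M.rankDH d₁ = rkFun h₀ h₁ := rfl
        rw [this, rkFun_a hh, rkFun_b hh]; omega)
    · by_cases e1 : d = d₂
      · rw [e1, if_neg (Ne.symm hd), if_pos rfl]
        have hfil : (univ.filter fun h => M.accD d₂ h ∧ d₂ ∈ hProps M ι ∅ h)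
            = {h₀} := by
          ext h
          simp only [mem_filter, mem_univ, true_and, hP0]
          by_cases f0 : h = h₀
          · simp [f0, hM, MD, hd, Ne.symm hd, hh, Ne.symm hh]
          · by_cases f1 : h = h₁ <;> simp [f0, f1, hM, MD, e0, Ne.symm hd, hh, Ne.symm hh]
        rw [hfil]
        exact topN_singleton _ (by omega) h₀
      · rw [if_neg e0, if_neg e1]
        have hfil : (univ.filter fun h => M.accD d h ∧ d ∈ hProps M ι ∅ h)
            = ∅ := by
          ext h
          simp [hM, MD, e0, e1, hd, Ne.symm hd, hh, Ne.symm hh]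
        rw [hfil]
        exact topN_empty _ _
  have h3 : iStep M ι κ (∅ : Finset (H × D)) = {(h₁, d₁)} := by
    rw [iStep, empty_union]
    ext ⟨h, d⟩
    simp only [mem_filter, mem_univ, true_and, mem_singleton, Prod.mk.injEq, hP0, hK0]
    by_cases e0 : h = h₀ <;> by_cases e1 : h = h₁ <;>
      by_cases f0 : d = d₁ <;> by_cases f1 : d = d₂ <;>
      simp [e0, e1, f0, f1, hd, Ne.symm hd, hh, Ne.symm hh, ]
  -- Step 2 of interview DA (fixed point)
  have hP1 : ∀ h : H, hProps M ι ({(h₁, d₁)} : Finset (H × D)) h =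
      if h = h₀ then {d₁, d₂} else ∅ := by
    intro h
    rw [hProps]
    by_cases e0 : h = h₀
    · rw [e0, if_pos rfl]
      have hfil : (univ.filter fun d => M.accH h₀ d ∧ (h₀, d) ∉ ({(h₁, d₁)} : Finset (H × D)))
          = {d₁, d₂} := by
        ext d
        simp [hM, MD, hh, Ne.symm hh, hd, Ne.symm hd]
      rw [hfil]
      exact topN_pair_full _ hι0 hd
    · by_cases e1 : h = h₁
      · rw [e1, if_neg (Ne.symm hh)]
        have hfil : (univ.filter fun d => M.accH h₁ d ∧ (h₁, d) ∉ ({(h₁, d₁)} : Finset (H × D)))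
            = ∅ := by
          ext d
          simp [hM, MD, e0, hd, Ne.symm hd, hh, Ne.symm hh]
        rw [hfil]
        exact topN_empty _ _
      · rw [if_neg e0]
        have hfil : (univ.filter fun d => M.accH h d ∧ (h, d) ∉ ({(h₁, d₁)} : Finset (H × D)))
            = ∅ := by
          ext d
          simp [hM, MD, e0, e1, hd, Ne.symm hd, hh, Ne.symm hh]
        rw [hfil]
        exact topN_empty _ _
  have hK1 : ∀ d : D, dKeeps M ι κ ({(h₁, d₁)} : Finset (H × D)) d =
      if d = d₁ then {h₀} else if d = d₂ then {h₀} else ∅ := by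
    intro d
    rw [dKeeps]
    by_cases e0 : d = d₁
    · rw [e0, if_pos rfl]
      have hfil : (univ.filter fun h => M.accD d₁ h ∧ d₁ ∈ hProps M ι {(h₁, d₁)} h)
          = {h₀} := by
        ext h
        simp only [mem_filter, mem_univ, true_and, hP1]
        by_cases f0 : h = h₀
        · simp [f0, hM, MD, hd, Ne.symm hd, hh, Ne.symm hh]
        · simp [f0, hM, MD, hd, Ne.symm hd, hh, Ne.symm hh]
      rw [hfil]
      exact topN_singleton _ (by omega) h₀
    · by_cases e1 : d = d₂
      · rw [e1, if_neg (Ne.symm hd), if_pos rfl]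
        have hfil : (univ.filter fun h => M.accD d₂ h ∧ d₂ ∈ hProps M ι {(h₁, d₁)} h)
            = {h₀} := by
          ext h
          simp only [mem_filter, mem_univ, true_and, hP1]
          by_cases f0 : h = h₀
          · simp [f0, hM, MD, hd, Ne.symm hd, hh, Ne.symm hh]
          · simp [f0, hM, MD, e0, Ne.symm hd, hh, Ne.symm hh]
        rw [hfil]
        exact topN_singleton _ (by omega) h₀
      · rw [if_neg e0, if_neg e1]
        have hfil : (univ.filter fun h => M.accD d h ∧ d ∈ hProps M ι {(h₁, d₁)} h)
            = ∅ := by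
          ext h
          simp [hM, MD, e0, e1, hd, Ne.symm hd, hh, Ne.symm hh]
        rw [hfil]
        exact topN_empty _ _
  have h6 : iStep M ι κ ({(h₁, d₁)} : Finset (H × D)) = {(h₁, d₁)} := by
    rw [iStep]
    ext ⟨h, d⟩
    simp only [mem_union, mem_filter, mem_univ, true_and, mem_singleton, Prod.mk.injEq,
      hP1, hK1]
    by_cases e0 : h = h₀ <;> by_cases e1 : h = h₁ <;>
      by_cases f0 : d = d₁ <;> by_cases f1 : d = d₂ <;>
      simp [e0, e1, f0, f1, hd, Ne.symm hd, hh, Ne.symm hh, ]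
  have h7 : iRej M ι κ = ({(h₁, d₁)} : Finset (H × D)) := by
    rw [iRej]
    have hc : 0 < Fintype.card D * Fintype.card H :=
      Nat.mul_pos (Fintype.card_pos_iff.mpr ⟨d₁⟩) (Fintype.card_pos_iff.mpr ⟨h₀⟩)
    obtain ⟨m, hm⟩ : ∃ m, Fintype.card D * Fintype.card H = m + 1 :=
      ⟨Fintype.card D * Fintype.card H - 1, by omega⟩
    rw [hm, Function.iterate_succ_apply, h3, Function.iterate_fixed h6]
  have hV : interviews M ι κ = ({(h₀, d₁), (h₀, d₂)} : Finset (H × D)) := by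
    rw [interviews]
    ext ⟨h, d⟩
    simp only [mem_filter, mem_univ, true_and, mem_insert, mem_singleton, Prod.mk.injEq,
      h7, hP1, hK1]
    by_cases e0 : h = h₀ <;> by_cases e1 : h = h₁ <;>
      by_cases f0 : d = d₁ <;> by_cases f1 : d = d₂ <;>
      simp [e0, e1, f0, f1, hd, Ne.symm hd, hh, Ne.symm hh, ]
  set V : Finset (H × D) := {(h₀, d₁), (h₀, d₂)} with hVdef
  -- Match stage
  have hQ0 : ∀ d : D, dProps M V (∅ : Finset (D × H)) d =
      if d = d₁ then {h₀} else if d = d₂ then {h₀} else ∅ := by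
    intro d
    rw [dProps]
    by_cases e0 : d = d₁
    · rw [e0, if_pos rfl]
      have hfil : (univ.filter fun h => (h, d₁) ∈ V ∧ (d₁, h) ∉ (∅ : Finset (D × H)))
          = {h₀} := by
        ext h
        simp [hVdef, hd, Ne.symm hd, hh, Ne.symm hh]
      rw [hfil]
      exact topN_singleton _ (by omega) h₀
    · by_cases e1 : d = d₂
      · rw [e1, if_neg (Ne.symm hd), if_pos rfl]
        have hfil : (univ.filter fun h => (h, d₂) ∈ V ∧ (d₂, h) ∉ (∅ : Finset (D × H)))
            = {h₀} := by
          ext h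
          simp [hVdef, e0, Ne.symm hd, hh, Ne.symm hh]
        rw [hfil]
        exact topN_singleton _ (by omega) h₀
      · rw [if_neg e0, if_neg e1]
        have hfil : (univ.filter fun h => (h, d) ∈ V ∧ (d, h) ∉ (∅ : Finset (D × H)))
            = ∅ := by
          ext h
          simp [hVdef, e0, e1, hd, Ne.symm hd, hh, Ne.symm hh]
        rw [hfil]
        exact topN_empty _ _
  have hR0 : ∀ h : H, hKeeps M V (∅ : Finset (D × H)) h =
      if h = h₀ then {d₂} else ∅ := by
    intro h
    rw [hKeeps]
    by_cases e0 : h = h₀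
    · rw [e0, if_pos rfl]
      have hfil : (univ.filter fun d => h₀ ∈ dProps M V ∅ d) = {d₂, d₁} := by
        ext d
        simp only [mem_filter, mem_univ, true_and, hQ0]
        by_cases f0 : d = d₁ <;> by_cases f1 : d = d₂ <;>
          simp [f0, f1, hd, Ne.symm hd, hh, Ne.symm hh]
      rw [hfil]
      have : ({d₂, d₁} : Finset D) = {d₂, d₁} := rfl
      exact topN_pair_one _ (by
        show (M.rankHD h₀) d₂ < (M.rankHD h₀) d₁
        have : M.rankHD h₀ = rkFun d₂ d₁ := rfl
        rw [this, rkFun_a (Ne.symm hd), rkFun_b (Ne.symm hd)]; omega)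
    · rw [if_neg e0]
      have hfil : (univ.filter fun d => h ∈ dProps M V ∅ d) = ∅ := by
        ext d
        simp only [mem_filter, mem_univ, true_and, hQ0]
        by_cases f0 : d = d₁ <;> by_cases f1 : d = d₂ <;>
          simp [f0, f1, e0, hd, Ne.symm hd, hh, Ne.symm hh]
      rw [hfil]
      exact topN_empty _ _
  have hm3 : mStep M V (∅ : Finset (D × H)) = {(d₁, h₀)} := by
    rw [mStep, empty_union]
    ext ⟨d, h⟩
    simp only [mem_filter, mem_univ, true_and, mem_singleton, Prod.mk.injEq, hQ0, hR0]
    by_cases e0 : h = h₀ <;> by_cases f0 : d = d₁ <;> by_cases f1 : d = d₂ <;>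
      simp [e0, f0, f1, hd, Ne.symm hd, hh, Ne.symm hh, ]
  have hQ1 : ∀ d : D, dProps M V ({(d₁, h₀)} : Finset (D × H)) d =
      if d = d₂ then {h₀} else ∅ := by
    intro d
    rw [dProps]
    by_cases e0 : d = d₁
    · rw [e0, if_neg hd]
      have hfil : (univ.filter fun h => (h, d₁) ∈ V ∧ (d₁, h) ∉ ({(d₁, h₀)} : Finset (D × H)))
          = ∅ := by
        ext h
        simp [hVdef, hd, Ne.symm hd, hh, Ne.symm hh]
      rw [hfil]
      exact topN_empty _ _
    · by_cases e1 : d = d₂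
      · rw [e1, if_pos rfl]
        have hfil : (univ.filter fun h => (h, d₂) ∈ V ∧ (d₂, h) ∉ ({(d₁, h₀)} : Finset (D × H)))
            = {h₀} := by
          ext h
          simp [hVdef, e0, Ne.symm hd, hh, Ne.symm hh]
        rw [hfil]
        exact topN_singleton _ (by omega) h₀
      · rw [if_neg e1]
        have hfil : (univ.filter fun h => (h, d) ∈ V ∧ (d, h) ∉ ({(d₁, h₀)} : Finset (D × H)))
            = ∅ := by
          ext h
          simp [hVdef, e0, e1, hd, Ne.symm hd, hh, Ne.symm hh]
        rw [hfil]
        exact topN_empty _ _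
  have hR1 : ∀ h : H, hKeeps M V ({(d₁, h₀)} : Finset (D × H)) h =
      if h = h₀ then {d₂} else ∅ := by
    intro h
    rw [hKeeps]
    by_cases e0 : h = h₀
    · rw [e0, if_pos rfl]
      have hfil : (univ.filter fun d => h₀ ∈ dProps M V {(d₁, h₀)} d) = {d₂} := by
        ext d
        simp only [mem_filter, mem_univ, true_and, hQ1]
        by_cases f1 : d = d₂ <;> simp [f1, hd, Ne.symm hd, hh, Ne.symm hh]
      rw [hfil]
      exact topN_singleton _ (by omega) d₂
    · rw [if_neg e0]
      have hfil : (univ.filter fun d => h ∈ dProps M V {(d₁, h₀)} d) = ∅ := by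
        ext d
        simp only [mem_filter, mem_univ, true_and, hQ1]
        by_cases f1 : d = d₂ <;> simp [f1, e0, hd, Ne.symm hd, hh, Ne.symm hh]
      rw [hfil]
      exact topN_empty _ _
  have hm6 : mStep M V ({(d₁, h₀)} : Finset (D × H)) = {(d₁, h₀)} := by
    rw [mStep]
    ext ⟨d, h⟩
    simp only [mem_union, mem_filter, mem_univ, true_and, mem_singleton, Prod.mk.injEq,
      hQ1, hR1]
    by_cases e0 : h = h₀ <;> by_cases f0 : d = d₁ <;> by_cases f1 : d = d₂ <;>
      simp [e0, f0, f1, hd, Ne.symm hd, hh, Ne.symm hh]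
  have hm7 : mRej M V = ({(d₁, h₀)} : Finset (D × H)) := by
    rw [mRej]
    have hc : 0 < Fintype.card D * Fintype.card H :=
      Nat.mul_pos (Fintype.card_pos_iff.mpr ⟨d₁⟩) (Fintype.card_pos_iff.mpr ⟨h₀⟩)
    obtain ⟨m, hm⟩ : ∃ m, Fintype.card D * Fintype.card H = m + 1 :=
      ⟨Fintype.card D * Fintype.card H - 1, by omega⟩
    rw [hm, Function.iterate_succ_apply, hm3, Function.iterate_fixed hm6]
  have hfin : finalMatch M V = ({(d₂, h₀)} : Finset (D × H)) := by
    rw [finalMatch]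
    ext ⟨d, h⟩
    simp only [mem_filter, mem_univ, true_and, mem_singleton, Prod.mk.injEq, hm7, hQ1, hR1]
    by_cases e0 : h = h₀ <;> by_cases f1 : d = d₂ <;>
      simp [e0, f1, hd, Ne.symm hd, hh, Ne.symm hh]
  have hik : ikMatching M ι κ = ({(d₂, h₀)} : Finset (D × H)) := by
    rw [ikMatching, hV]
    exact hfin
  refine had d₁ h₁ ?_
  rw [hik]
  refine ⟨by simp [hM, MD, hd, Ne.symm hd, hh, Ne.symm hh], by simp [hM, MD, hd, Ne.symm hd, hh, Ne.symm hh], ?_, ?_, ?_⟩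
  · simp [hd, Prod.ext_iff, Ne.symm hd, hh, Ne.symm hh]
  · intro h' hm'
    rw [mem_singleton, Prod.ext_iff] at hm'
    exact absurd hm'.1 hd
  · intro d' hm'
    rw [mem_singleton, Prod.ext_iff] at hm'
    exact absurd hm'.2 (Ne.symm hh)

/-- Market for case C (some hospital has ι = 1). -/
noncomputable def MC (d₁ d₂ : D) (h₀ h₁ : H) : Market D H where
  rankDH := fun _ => rkFun h₀ h₁
  accD := fun d h => decide ((d = d₁ ∨ d = d₂) ∧ (h = h₀ ∨ h = h₁))
  rankHD := fun _ => rkFun d₁ d₂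
  accH := fun h d => decide ((d = d₁ ∨ d = d₂) ∧ (h = h₀ ∨ h = h₁))

lemma MC_strict {d₁ d₂ : D} {h₀ h₁ : H} (hd : d₁ ≠ d₂) (hh : h₀ ≠ h₁) :
    (MC d₁ d₂ h₀ h₁ : Market D H).Strict :=
  ⟨fun _ => rkFun_inj hh, fun _ => rkFun_inj hd⟩

lemma caseC (d₁ d₂ : D) (h₀ h₁ : H) (hd : d₁ ≠ d₂) (hh : h₀ ≠ h₁)
    (ι : H → ℕ) (κ : D → ℕ) (hι0 : 2 ≤ ι h₀) (hι1 : ι h₁ = 1)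
    (hκ1 : 2 ≤ κ d₁) (hκ2 : 2 ≤ κ d₂) :
    ¬ Adequate (MC d₁ d₂ h₀ h₁) ι κ := by
  intro had
  set M := MC d₁ d₂ h₀ h₁ with hM
  have hP0 : ∀ h : H, hProps M ι (∅ : Finset (H × D)) h =
      if h = h₀ then {d₁, d₂} else if h = h₁ then {d₁} else ∅ := by
    intro h
    rw [hProps]
    by_cases e0 : h = h₀
    · rw [e0, if_pos rfl]
      have hfil : (univ.filter fun d => M.accH h₀ d ∧ (h₀, d) ∉ (∅ : Finset (H × D)))
          = {d₁, d₂} := by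
        ext d
        simp [hM, MC, hd, Ne.symm hd, hh, Ne.symm hh]
      rw [hfil]
      exact topN_pair_full _ hι0 hd
    · by_cases e1 : h = h₁
      · rw [e1, if_neg (Ne.symm hh), if_pos rfl]
        have hfil : (univ.filter fun d => M.accH h₁ d ∧ (h₁, d) ∉ (∅ : Finset (H × D)))
            = {d₁, d₂} := by
          ext d
          simp [hM, MC, hd, Ne.symm hd, hh, Ne.symm hh]
        rw [hfil]
        have hn : ι h₁ = 1 := hι1
        rw [hn]
        exact topN_pair_one _ (by
          show (M.rankHD h₁) d₁ < (M.rankHD h₁) d₂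
          have : M.rankHD h₁ = rkFun d₁ d₂ := rfl
          rw [this, rkFun_a hd, rkFun_b hd]; omega)
      · rw [if_neg e0, if_neg e1]
        have hfil : (univ.filter fun d => M.accH h d ∧ (h, d) ∉ (∅ : Finset (H × D)))
            = ∅ := by
          ext d
          simp [hM, MC, e0, e1, hd, Ne.symm hd, hh, Ne.symm hh]
        rw [hfil]
        exact topN_empty _ _
  have hK0 : ∀ d : D, dKeeps M ι κ (∅ : Finset (H × D)) d =
      if d = d₁ then {h₀, h₁} else if d = d₂ then {h₀} else ∅ := by
    intro d
    rw [dKeeps]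
    by_cases e0 : d = d₁
    · rw [e0, if_pos rfl]
      have hfil : (univ.filter fun h => M.accD d₁ h ∧ d₁ ∈ hProps M ι ∅ h)
          = {h₀, h₁} := by
        ext h
        simp only [mem_filter, mem_univ, true_and, hP0]
        by_cases f0 : h = h₀
        · simp [f0, hM, MC, hd, Ne.symm hd, hh, Ne.symm hh]
        · by_cases f1 : h = h₁ <;> simp [f0, f1, hM, MC, hd, Ne.symm hd, hh, Ne.symm hh]
      rw [hfil]
      exact topN_pair_full _ hκ1 hh
    · by_cases e1 : d = d₂
      · rw [e1, if_neg (Ne.symm hd), if_pos rfl]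
        have hfil : (univ.filter fun h => M.accD d₂ h ∧ d₂ ∈ hProps M ι ∅ h)
            = {h₀} := by
          ext h
          simp only [mem_filter, mem_univ, true_and, hP0]
          by_cases f0 : h = h₀
          · simp [f0, hM, MC, hd, Ne.symm hd, hh, Ne.symm hh]
          · by_cases f1 : h = h₁ <;> simp [f0, f1, hM, MC, Ne.symm hd, hh, Ne.symm hh]
        rw [hfil]
        exact topN_singleton _ (by omega) h₀
      · rw [if_neg e0, if_neg e1]
        have hfil : (univ.filter fun h => M.accD d h ∧ d ∈ hProps M ι ∅ h)
            = ∅ := by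
          ext h
          simp [hM, MC, e0, e1, hd, Ne.symm hd, hh, Ne.symm hh]
        rw [hfil]
        exact topN_empty _ _
  have h3 : iStep M ι κ (∅ : Finset (H × D)) = (∅ : Finset (H × D)) := by
    rw [iStep, empty_union]
    ext ⟨h, d⟩
    simp only [mem_filter, mem_univ, true_and, notMem_empty, iff_false, not_and, hP0, hK0]
    by_cases e0 : h = h₀ <;> by_cases e1 : h = h₁ <;>
      by_cases f0 : d = d₁ <;> by_cases f1 : d = d₂ <;>
      simp [e0, e1, f0, f1, hd, Ne.symm hd, hh, Ne.symm hh, ]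
  have h7 : iRej M ι κ = (∅ : Finset (H × D)) := by
    rw [iRej]
    exact Function.iterate_fixed h3 _
  have hV : interviews M ι κ = ({(h₀, d₁), (h₀, d₂), (h₁, d₁)} : Finset (H × D)) := by
    rw [interviews]
    ext ⟨h, d⟩
    simp only [mem_filter, mem_univ, true_and, mem_insert, mem_singleton, Prod.mk.injEq,
      h7, hP0, hK0]
    by_cases e0 : h = h₀ <;> by_cases e1 : h = h₁ <;>
      by_cases f0 : d = d₁ <;> by_cases f1 : d = d₂ <;>
      simp [e0, e1, f0, f1, hd, Ne.symm hd, hh, Ne.symm hh, ]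
  set V : Finset (H × D) := {(h₀, d₁), (h₀, d₂), (h₁, d₁)} with hVdef
  have hQ0 : ∀ d : D, dProps M V (∅ : Finset (D × H)) d =
      if d = d₁ then {h₀} else if d = d₂ then {h₀} else ∅ := by
    intro d
    rw [dProps]
    by_cases e0 : d = d₁
    · rw [e0, if_pos rfl]
      have hfil : (univ.filter fun h => (h, d₁) ∈ V ∧ (d₁, h) ∉ (∅ : Finset (D × H)))
          = {h₀, h₁} := by
        ext h
        simp [hVdef, hd, Ne.symm hd, hh, Ne.symm hh]
      rw [hfil]
      exact topN_pair_one _ (by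
        show (M.rankDH d₁) h₀ < (M.rankDH d₁) h₁
        have : M.rankDH d₁ = rkFun h₀ h₁ := rfl
        rw [this, rkFun_a hh, rkFun_b hh]; omega)
    · by_cases e1 : d = d₂
      · rw [e1, if_neg (Ne.symm hd), if_pos rfl]
        have hfil : (univ.filter fun h => (h, d₂) ∈ V ∧ (d₂, h) ∉ (∅ : Finset (D × H)))
            = {h₀} := by
          ext h
          simp [hVdef, hd, Ne.symm hd, hh, Ne.symm hh]
        rw [hfil]
        exact topN_singleton _ (by omega) h₀
      · rw [if_neg e0, if_neg e1]
        have hfil : (univ.filter fun h => (h, d) ∈ V ∧ (d, h) ∉ (∅ : Finset (D × H)))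
            = ∅ := by
          ext h
          simp [hVdef, e0, e1, hd, Ne.symm hd, hh, Ne.symm hh]
        rw [hfil]
        exact topN_empty _ _
  have hR0 : ∀ h : H, hKeeps M V (∅ : Finset (D × H)) h =
      if h = h₀ then {d₁} else ∅ := by
    intro h
    rw [hKeeps]
    by_cases e0 : h = h₀
    · rw [e0, if_pos rfl]
      have hfil : (univ.filter fun d => h₀ ∈ dProps M V ∅ d) = {d₁, d₂} := by
        ext d
        simp only [mem_filter, mem_univ, true_and, hQ0]
        by_cases f0 : d = d₁ <;> by_cases f1 : d = d₂ <;>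
          simp [f0, f1, hd, Ne.symm hd, hh, Ne.symm hh]
      rw [hfil]
      exact topN_pair_one _ (by
        show (M.rankHD h₀) d₁ < (M.rankHD h₀) d₂
        have : M.rankHD h₀ = rkFun d₁ d₂ := rfl
        rw [this, rkFun_a hd, rkFun_b hd]; omega)
    · rw [if_neg e0]
      have hfil : (univ.filter fun d => h ∈ dProps M V ∅ d) = ∅ := by
        ext d
        simp only [mem_filter, mem_univ, true_and, hQ0]
        by_cases f0 : d = d₁ <;> by_cases f1 : d = d₂ <;>
          simp [f0, f1, e0, hd, Ne.symm hd, hh, Ne.symm hh]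
      rw [hfil]
      exact topN_empty _ _
  have hm3 : mStep M V (∅ : Finset (D × H)) = {(d₂, h₀)} := by
    rw [mStep, empty_union]
    ext ⟨d, h⟩
    simp only [mem_filter, mem_univ, true_and, mem_singleton, Prod.mk.injEq, hQ0, hR0]
    by_cases e0 : h = h₀ <;> by_cases f0 : d = d₁ <;> by_cases f1 : d = d₂ <;>
      simp [e0, f0, f1, hd, Ne.symm hd, hh, Ne.symm hh, ]
  have hQ1 : ∀ d : D, dProps M V ({(d₂, h₀)} : Finset (D × H)) d =
      if d = d₁ then {h₀} else ∅ := by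
    intro d
    rw [dProps]
    by_cases e0 : d = d₁
    · rw [e0, if_pos rfl]
      have hfil : (univ.filter fun h => (h, d₁) ∈ V ∧ (d₁, h) ∉ ({(d₂, h₀)} : Finset (D × H)))
          = {h₀, h₁} := by
        ext h
        simp [hVdef, hd, Ne.symm hd, hh, Ne.symm hh]
      rw [hfil]
      exact topN_pair_one _ (by
        show (M.rankDH d₁) h₀ < (M.rankDH d₁) h₁
        have : M.rankDH d₁ = rkFun h₀ h₁ := rfl
        rw [this, rkFun_a hh, rkFun_b hh]; omega)
    · by_cases e1 : d = d₂
      · rw [e1, if_neg (Ne.symm hd)]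
        have hfil : (univ.filter fun h => (h, d₂) ∈ V ∧ (d₂, h) ∉ ({(d₂, h₀)} : Finset (D × H)))
            = ∅ := by
          ext h
          simp only [mem_filter, mem_univ, true_and, mem_singleton, Prod.mk.injEq, hVdef,
            mem_insert]
          by_cases f0 : h = h₀ <;> by_cases f1 : h = h₁ <;>
            simp [f0, f1, hd, Ne.symm hd, hh, Ne.symm hh, ]
        rw [hfil]
        exact topN_empty _ _
      · rw [if_neg e0]
        have hfil : (univ.filter fun h => (h, d) ∈ V ∧ (d, h) ∉ ({(d₂, h₀)} : Finset (D × H)))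
            = ∅ := by
          ext h
          simp [hVdef, e0, e1, hd, Ne.symm hd, hh, Ne.symm hh]
        rw [hfil]
        exact topN_empty _ _
  have hR1 : ∀ h : H, hKeeps M V ({(d₂, h₀)} : Finset (D × H)) h =
      if h = h₀ then {d₁} else ∅ := by
    intro h
    rw [hKeeps]
    by_cases e0 : h = h₀
    · rw [e0, if_pos rfl]
      have hfil : (univ.filter fun d => h₀ ∈ dProps M V {(d₂, h₀)} d) = {d₁} := by
        ext d
        simp only [mem_filter, mem_univ, true_and, hQ1]
        by_cases f0 : d = d₁ <;> simp [f0, hd, Ne.symm hd, hh, Ne.symm hh]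
      rw [hfil]
      exact topN_singleton _ (by omega) d₁
    · rw [if_neg e0]
      have hfil : (univ.filter fun d => h ∈ dProps M V {(d₂, h₀)} d) = ∅ := by
        ext d
        simp only [mem_filter, mem_univ, true_and, hQ1]
        by_cases f0 : d = d₁ <;> simp [f0, e0, hd, Ne.symm hd, hh, Ne.symm hh]
      rw [hfil]
      exact topN_empty _ _
  have hm6 : mStep M V ({(d₂, h₀)} : Finset (D × H)) = {(d₂, h₀)} := by
    rw [mStep]
    ext ⟨d, h⟩
    simp only [mem_union, mem_filter, mem_univ, true_and, mem_singleton, Prod.mk.injEq,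
      hQ1, hR1]
    by_cases e0 : h = h₀ <;> by_cases f0 : d = d₁ <;> by_cases f1 : d = d₂ <;>
      simp [e0, f0, f1, hd, Ne.symm hd, hh, Ne.symm hh]
  have hm7 : mRej M V = ({(d₂, h₀)} : Finset (D × H)) := by
    rw [mRej]
    obtain ⟨m, hm⟩ : ∃ m, Fintype.card D * Fintype.card H = m + 1 := by
      have hc : 0 < Fintype.card D * Fintype.card H :=
        Nat.mul_pos (Fintype.card_pos_iff.mpr ⟨d₁⟩) (Fintype.card_pos_iff.mpr ⟨h₀⟩)
      exact ⟨Fintype.card D * Fintype.card H - 1, by omega⟩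
    rw [hm, Function.iterate_succ_apply, hm3, Function.iterate_fixed hm6]
  have hfin : finalMatch M V = ({(d₁, h₀)} : Finset (D × H)) := by
    rw [finalMatch]
    ext ⟨d, h⟩
    simp only [mem_filter, mem_univ, true_and, mem_singleton, Prod.mk.injEq, hm7, hQ1, hR1]
    by_cases e0 : h = h₀ <;> by_cases f0 : d = d₁ <;>
      simp [e0, f0, hd, Ne.symm hd, hh, Ne.symm hh]
  have hik : ikMatching M ι κ = ({(d₁, h₀)} : Finset (D × H)) := by
    rw [ikMatching, hV]
    exact hfin
  refine had d₂ h₁ ?_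
  rw [hik]
  refine ⟨by simp [hM, MC, hd, Ne.symm hd, hh, Ne.symm hh], by simp [hM, MC, hd, Ne.symm hd, hh, Ne.symm hh], ?_, ?_, ?_⟩
  · simp [Ne.symm hd, Prod.ext_iff, hh, Ne.symm hh]
  · intro h' hm'
    rw [mem_singleton, Prod.ext_iff] at hm'
    exact absurd hm'.1 (Ne.symm hd)
  · intro d' hm'
    rw [mem_singleton, Prod.ext_iff] at hm'
    exact absurd hm'.2 (Ne.symm hh)

end Aux

/-- If `(ι,κ)` is globally adequate and some hospital has interview
capacity greater than one, then every hospital and every doctor has interview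
capacity at least two. -/
theorem globally_adequate_hospital_capacity
    (hD : 2 ≤ Fintype.card D) (hH : 2 ≤ Fintype.card H)
    (ι : H → ℕ) (κ : D → ℕ) (hga : GloballyAdequate D H ι κ)
    (hex : ∃ h : H, 1 < ι h) :
    (∀ h : H, 2 ≤ ι h) ∧ (∀ d : D, 2 ≤ κ d) := by
  obtain ⟨h₀, hι0⟩ := hex
  have hDne : Nonempty D := Fintype.card_pos_iff.mp (by omega)
  have hHne : Nonempty H := Fintype.card_pos_iff.mp (by omega)
  obtain ⟨d₀⟩ := hDne
  have hι1 : ∀ h : H, 1 ≤ ι h := by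
    intro h
    by_contra hc
    exact caseAB d₀ h ι κ (Or.inl (by omega)) (hga _ (MAB_strict d₀ h))
  have hκ1 : ∀ d : D, 1 ≤ κ d := by
    intro d
    by_contra hc
    obtain ⟨h⟩ := hHne
    exact caseAB d h ι κ (Or.inr (by omega)) (hga _ (MAB_strict d h))
  have hκ2 : ∀ d : D, 2 ≤ κ d := by
    intro d
    by_contra hc
    have hκd : κ d = 1 := by have := hκ1 d; omega
    obtain ⟨d₂, hd2⟩ := Fintype.exists_ne_of_one_lt_card (by omega) d
    obtain ⟨h₁, hh1⟩ := Fintype.exists_ne_of_one_lt_card (by omega) h₀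
    exact caseD d d₂ h₀ h₁ hd2.symm (Ne.symm hh1) ι κ hι0 (hι1 h₁) hκd (hκ1 d₂)
      (hga _ (MD_strict hd2.symm (Ne.symm hh1)))
  refine ⟨?_, hκ2⟩
  intro h
  by_contra hc
  have hιh : ι h = 1 := by have := hι1 h; omega
  have hne : h₀ ≠ h := by intro e; rw [e] at hι0; omega
  obtain ⟨d₂, hd2⟩ := Fintype.exists_ne_of_one_lt_card (by omega) d₀
  exact caseC d₀ d₂ h₀ h hd2.symm hne ι κ hι0 hιh (hκ2 d₀) (hκ2 d₂)
    (hga _ (MC_strict hd2.symm hne))
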